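/- arXiv:1902.03851 — 5 statements merged into one kernel-verified Lean document; each statement's English description precedes it below -/
import Mathlib

section
/- Let n be a positive integer and let α ∈ ℂ be a primitive 3n-th root of unity. Then Σ_{k=-n}^{n-1} (-1)^k · α^{3k(k+1)/2} / (1 - α^{3k+1}) = 0. (All denominators are nonzero since 3k+1 is never divisible by 3n for −n ≤ k ≤ n−1.) -/
/-!
With `ω = α ^ 3`, a primitive `n`-th root of unity, the summand `f k` satisfies
`f (k + n) = -f k`: the denominator only sees `α ^ (3k+1)` modulo `α ^ (3n) = 1`, and the
triangular exponent gains `n k + n (n + 1) / 2`, contributing `ω ^ (n (n + 1) / 2) = (-1) ^ (n + 1)`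
against the sign `(-1) ^ n`. Hence the halves `[-n, 0)` and `[0, n)` of the sum cancel.
-/

open Finset

theorem Function.Antiperiodic.sum_Ico_neg_eq_zero {M : Type*} [AddCommGroup M] {g : ℤ → M}
    {n : ℕ} (hg : Function.Antiperiodic g n) : ∑ k ∈ Ico (-(n : ℤ)) n, g k = 0 := by
  rw [← Ico_union_Ico_eq_Ico (b := 0) (by omega) (by omega),
    sum_union (Ico_disjoint_Ico_consecutive _ _ _)]
  have hshift : ∑ k ∈ Ico (0 : ℤ) n, g k = ∑ k ∈ Ico (-(n : ℤ)) 0, g (k + n) := by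
    rw [sum_Ico_add']; simp
  simp [hshift, hg _]

theorem IsPrimitiveRoot.pow_mul_succ_div_two {R : Type*} [CommRing R] [NoZeroDivisors R]
    {ω : R} {n : ℕ} (hn : 0 < n) (hω : IsPrimitiveRoot ω n) :
    ω ^ (n * (n + 1) / 2) = (-1) ^ (n + 1) := by
  rcases n.even_or_odd with ⟨m, rfl⟩ | ⟨m, rfl⟩
  · have hm : ω ^ m = -1 := (hω.pow hn (mul_two m).symm).eq_neg_one_of_two_right
    rw [Nat.div_eq_of_eq_mul_left two_pos
      (show (m + m) * (m + m + 1) = m * (2 * m + 1) * 2 by ring), pow_mul, hm, ← two_mul]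
  · rw [Nat.div_eq_of_eq_mul_left two_pos
      (show (2 * m + 1) * (2 * m + 1 + 1) = (2 * m + 1) * (m + 1) * 2 by ring),
      pow_mul, hω.pow_eq_one, one_pow, show 2 * m + 1 + 1 = 2 * (m + 1) by ring, pow_mul]
    simp

theorem Int.mul_succ_div_two_add (k n : ℤ) :
    (k + n) * (k + n + 1) / 2 = k * (k + 1) / 2 + n * k + n * (n + 1) / 2 := by
  obtain ⟨a, ha⟩ := Int.two_dvd_mul_add_one k
  obtain ⟨b, hb⟩ := Int.two_dvd_mul_add_one n
  rw [ha, hb, Int.mul_ediv_cancel_left _ two_ne_zero, Int.mul_ediv_cancel_left _ two_ne_zero]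
  exact Int.ediv_eq_of_eq_mul_left two_ne_zero (by linear_combination ha + hb)

def triangularSummand {K : Type*} [Field K] (α : K) (m : ℕ) (k : ℤ) : K :=
  (-1) ^ k * α ^ (m * k * (k + 1) / 2) / (1 - α ^ (m * k + 1))

theorem IsPrimitiveRoot.antiperiodic_triangularSummand {K : Type*} [Field K] {α : K} {m n : ℕ}
    (hm : 0 < m) (hn : 0 < n) (hα : IsPrimitiveRoot α (m * n)) :
    Function.Antiperiodic (triangularSummand α m) n := by
  have hα0 : α ≠ 0 := hα.ne_zero (by positivity)
  have hω : IsPrimitiveRoot (α ^ m) n := hα.pow (by positivity) rfl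
  have hexp (j : ℤ) : α ^ ((m : ℤ) * j * (j + 1) / 2) = (α ^ m) ^ (j * (j + 1) / 2) := by
    rw [mul_assoc, Int.mul_ediv_assoc _ (Int.two_dvd_mul_add_one j), zpow_mul, zpow_natCast]
  have hαmn : α ^ ((m : ℤ) * n) = 1 := by
    rw [zpow_mul, zpow_natCast, zpow_natCast, hω.pow_eq_one]
  have hsign : (-1 : K) ^ (n : ℤ) * (α ^ m) ^ ((n : ℤ) * (n + 1) / 2) = -1 := by
    have hcast : (n : ℤ) * (n + 1) / 2 = ((n * (n + 1) / 2 : ℕ) : ℤ) := by push_cast; rfl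
    rw [hcast, zpow_natCast, zpow_natCast, hω.pow_mul_succ_div_two hn, ← pow_add]
    exact Odd.neg_one_pow ⟨n, by ring⟩
  have hperiod (k : ℤ) : α ^ ((m : ℤ) * (k + n) + 1) = α ^ ((m : ℤ) * k + 1) := by
    rw [show (m : ℤ) * (k + n) + 1 = (m * k + 1) + m * n by ring, zpow_add₀ hα0, hαmn, mul_one]
  intro k
  have hcross : (α ^ m) ^ ((n : ℤ) * k) = 1 := by
    rw [zpow_mul, zpow_natCast, hω.pow_eq_one, one_zpow]
  simp only [triangularSummand, hexp, Int.mul_succ_div_two_add, hperiod]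
  rw [zpow_add₀ (neg_ne_zero.mpr one_ne_zero), zpow_add₀ (pow_ne_zero _ hα0),
    zpow_add₀ (pow_ne_zero _ hα0), hcross]
  linear_combination ((-1) ^ k * (α ^ m) ^ (k * (k + 1) / 2) / (1 - α ^ (m * k + 1))) * hsign

theorem stmt_3 (n : ℕ) (hn : 0 < n) (α : ℂ) (hα : IsPrimitiveRoot α (3 * n)) :
    ∑ k ∈ Finset.Icc (-(n : ℤ)) ((n : ℤ) - 1),
      (-1 : ℂ) ^ k * α ^ ((3 * k * (k + 1)) / 2) / (1 - α ^ (3 * k + 1)) = 0 := by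
  have hIcc : Icc (-(n : ℤ)) (n - 1) = Ico (-(n : ℤ)) n := by ext; simp
  rw [hIcc]
  exact (hα.antiperiodic_triangularSummand three_pos hn).sum_Ico_neg_eq_zero
end

section
/- Let n be a positive integer and let ζ ∈ ℂ be a primitive (3n+1)-th root of unity. Then Σ_{k=1}^{n} 1/(1 - ζ^{3k-1}) = n/2. (All denominators are nonzero since 3k−1 is never divisible by 3n+1 for 1 ≤ k ≤ n.) -/
/-! The exponents `3k - 1` and `3(n + 1 - k) - 1` add up to `3n + 1`, so the terms with indices
`k` and `n + 1 - k` are `1/(1 - x)` and `1/(1 - x⁻¹)` for `x = ζ^(3k-1) ≠ 1`, and these sum to `1`.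
Hence twice the sum is `n`. -/

open Finset

theorem Finset.sum_Icc_reflect {M : Type*} [AddCommMonoid M] (f : ℕ → M) (n : ℕ) :
    ∑ k ∈ Icc 1 n, f (n + 1 - k) = ∑ k ∈ Icc 1 n, f k := by
  rw [← Ico_add_one_right_eq_Icc, sum_Ico_reflect f 1 (Nat.le_succ (n + 1))]
  simp

theorem Finset.sum_Icc_eq_half_of_add_reflect_eq_one {K : Type*} [DivisionRing K]
    [NeZero (2 : K)] (f : ℕ → K) (n : ℕ) (h : ∀ k ∈ Icc 1 n, f k + f (n + 1 - k) = 1) :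
    ∑ k ∈ Icc 1 n, f k = n / 2 := by
  have hdouble : ∑ k ∈ Icc 1 n, f k + ∑ k ∈ Icc 1 n, f k = n := by
    nth_rewrite 2 [← sum_Icc_reflect]
    rw [← sum_add_distrib, sum_congr rfl h]
    simp
  rw [eq_div_iff two_ne_zero, mul_two, hdouble]

theorem one_div_one_sub_add_one_div_one_sub_of_mul_eq_one {K : Type*} [Field K] {x y : K}
    (hxy : x * y = 1) (hx : x ≠ 1) : 1 / (1 - x) + 1 / (1 - y) = 1 := by
  have hy : y ≠ 1 := by rintro rfl; exact hx (by simpa using hxy)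
  rw [div_add_div _ _ (sub_ne_zero.2 hx.symm) (sub_ne_zero.2 hy.symm), div_eq_one_iff_eq]
  · linear_combination -hxy
  · exact mul_ne_zero (sub_ne_zero.2 hx.symm) (sub_ne_zero.2 hy.symm)

theorem IsPrimitiveRoot.one_div_one_sub_pow_add_one_div_one_sub_pow {K : Type*} [Field K]
    {ζ : K} {m a b : ℕ} (hζ : IsPrimitiveRoot ζ m) (hab : a + b = m) (ha : 0 < a) (hb : 0 < b) :
    1 / (1 - ζ ^ a) + 1 / (1 - ζ ^ b) = 1 :=
  one_div_one_sub_add_one_div_one_sub_of_mul_eq_one (by rw [← pow_add, hab, hζ.pow_eq_one])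
    (hζ.pow_ne_one_of_pos_of_lt ha.ne' (by omega))

theorem stmt_6_general (n : ℕ) (ζ : ℂ) (hζ : IsPrimitiveRoot ζ (3 * n + 1)) :
    ∑ k ∈ Finset.Icc 1 n, 1 / (1 - ζ ^ (3 * k - 1)) = (n : ℂ) / 2 := by
  refine sum_Icc_eq_half_of_add_reflect_eq_one _ n fun k hk => ?_
  have hk := mem_Icc.1 hk
  exact hζ.one_div_one_sub_pow_add_one_div_one_sub_pow (by omega) (by omega) (by omega)

theorem stmt_6 (n : ℕ) (hn : 0 < n) (ζ : ℂ) (hζ : IsPrimitiveRoot ζ (3 * n + 1)) :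
    ∑ k ∈ Finset.Icc 1 n, 1 / (1 - ζ ^ (3 * k - 1)) = (n : ℂ) / 2 :=
  stmt_6_general n ζ hζ
end

section
/- Let n be a positive integer and let ω ∈ ℂ be a primitive (3n+2)-th root of unity. Then Σ_{k=1}^{3n+1} (ω^k − ω^{2k}) / (1 − ω^{3k}) = −(n+1). (All denominators are nonzero since 3k is never divisible by 3n+2 for 1 ≤ k ≤ 3n+1.) -/
/-!
As `ω ^ (3(n+1)) = ω` and `ω ^ (3k) ≠ 1` (because `3` is prime to `3n+2`), summing the geometric
series shows that each summand is `ω^k + ω^(4k) + ⋯ + ω^((3n+1)k)`. After exchanging the two sums,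
each inner sum runs over all nontrivial powers of the root of unity `ω^(3j+1) ≠ 1`, hence equals
`-1`; there are `n + 1` of them.
-/

open Finset

theorem sum_Icc_one_pow_eq_neg_one {K : Type*} [Field K] {x : K} {N : ℕ}
    (hx : x ≠ 1) (hxN : x ^ (N + 1) = 1) : ∑ k ∈ Icc 1 N, x ^ k = -1 := by
  have hzero : ∑ k ∈ range (N + 1), x ^ k = 0 := by
    rw [geom_sum_eq hx, hxN, sub_self, zero_div]
  rw [range_eq_Ico, sum_eq_sum_Ico_succ_bot N.succ_pos, pow_zero, zero_add,
    Nat.succ_eq_add_one, Ico_add_one_right_eq_Icc] at hzero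
  linear_combination hzero

theorem sub_sq_div_one_sub_pow_three_eq_sum {K : Type*} [Field K] {z : K} {n : ℕ}
    (hz : z ^ (3 * n + 2) = 1) (hz3 : z ^ 3 ≠ 1) :
    (z - z ^ 2) / (1 - z ^ 3) = ∑ j ∈ range (n + 1), z ^ (3 * j + 1) := by
  have hcube : (z ^ 3) ^ (n + 1) = z := by
    rw [← pow_mul, show 3 * (n + 1) = (3 * n + 2) + 1 by ring, pow_succ, hz, one_mul]
  have hden : (1 : K) - z ^ 3 ≠ 0 := sub_ne_zero.mpr hz3.symm
  calc (z - z ^ 2) / (1 - z ^ 3) = z * (((z ^ 3) ^ (n + 1) - 1) / (z ^ 3 - 1)) := by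
        rw [hcube]; field_simp; ring
    _ = ∑ j ∈ range (n + 1), z ^ (3 * j + 1) := by
        rw [← geom_sum_eq hz3, mul_sum]
        exact sum_congr rfl fun j _ => by ring

theorem stmt_7_general (n : ℕ) (ω : ℂ) (hω : IsPrimitiveRoot ω (3 * n + 2)) :
    ∑ k ∈ Finset.Icc 1 (3 * n + 1),
      (ω ^ k - ω ^ (2 * k)) / (1 - ω ^ (3 * k)) = -((n : ℂ) + 1) := by
  have hω3 : IsPrimitiveRoot (ω ^ 3) (3 * n + 2) :=
    hω.pow_of_coprime 3 ((Nat.coprime_mul_left_add_right 3 2 n).mpr (by norm_num))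
  have hsummand : ∀ k ∈ Icc 1 (3 * n + 1), (ω ^ k - ω ^ (2 * k)) / (1 - ω ^ (3 * k)) =
      ∑ j ∈ range (n + 1), (ω ^ (3 * j + 1)) ^ k := by
    intro k hk
    rw [mem_Icc] at hk
    have h := sub_sq_div_one_sub_pow_three_eq_sum (z := ω ^ k) (n := n)
      (by rw [pow_right_comm, hω.pow_eq_one, one_pow])
      (by rw [pow_right_comm]; exact hω3.pow_ne_one_of_pos_of_lt (by omega) (by omega))
    rw [← pow_mul, ← pow_mul, mul_comm k 2, mul_comm k 3] at h
    rw [h]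
    exact sum_congr rfl fun j _ => by ring
  have hinner : ∀ j ∈ range (n + 1), ∑ k ∈ Icc 1 (3 * n + 1), (ω ^ (3 * j + 1)) ^ k = -1 := by
    intro j hj
    rw [mem_range] at hj
    exact sum_Icc_one_pow_eq_neg_one (hω.pow_ne_one_of_pos_of_lt (by omega) (by omega))
      (by rw [pow_right_comm, hω.pow_eq_one, one_pow])
  rw [sum_congr rfl hsummand, sum_comm, sum_congr rfl hinner]
  simp

theorem stmt_7 (n : ℕ) (hn : 0 < n) (ω : ℂ) (hω : IsPrimitiveRoot ω (3 * n + 2)) :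
    ∑ k ∈ Finset.Icc 1 (3 * n + 1),
      (ω ^ k - ω ^ (2 * k)) / (1 - ω ^ (3 * k)) = -((n : ℂ) + 1) :=
  stmt_7_general n ω hω
end

section
/- Let n be a positive integer and let k be an integer with 1 ≤ k ≤ n−1. Then in ℤ[q], the polynomial Φ_n(q)² divides q^{k(k-1)/2} · (1 − q^k) · [2n choose k]_q − 2·(q^n − 1)·(−1)^k. -/
open Polynomial

/-- The q-shifted factorial `(q; q)_n = (1-q)(1-q^2)⋯(1-q^n)` in `ℤ[q]`. -/
noncomputable def qPoch (n : ℕ) : Polynomial ℤ := ∏ i ∈ Finset.range n, (1 - X ^ (i + 1))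

/-!
Multiplying by `(q;q)_k`, which is prime to `Φ_n` since `k < n`, turns `[2n choose k]_q` into
`(1-q^{2n})(1-q^{2n-1})⋯(1-q^{2n-k+1})`. Modulo `Φ_n ∣ q^{2n} - 1` each factor `q^j(1-q^{2n-j})`
is `-(1-q^j)`, so `q^{k(k-1)/2}(1-q^{2n-1})⋯(1-q^{2n-k+1}) ≡ (-1)^{k-1}(q;q)_{k-1}`. Both terms of
`(q;q)_k` times the left-hand side carry a factor `q^n - 1`, and what remains is `≡ 0 (mod Φ_n)`
by that congruence.
-/

theorem Finset.dvd_prod_sub_prod {ι R : Type*} [CommRing R] {d : R} {s : Finset ι}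
    {f g : ι → R} (h : ∀ i ∈ s, d ∣ f i - g i) :
    d ∣ (∏ i ∈ s, f i) - ∏ i ∈ s, g i := by
  rw [← Ideal.mem_span_singleton, ← Ideal.Quotient.eq, map_prod, map_prod]
  exact Finset.prod_congr rfl fun i hi =>
    Ideal.Quotient.eq.2 (Ideal.mem_span_singleton.2 (h i hi))

theorem qPoch_succ (m : ℕ) : qPoch (m + 1) = qPoch m * (1 - X ^ (m + 1)) :=
  Finset.prod_range_succ _ m

theorem qPoch_ne_zero (m : ℕ) : qPoch m ≠ 0 := by
  have h : (qPoch m).eval 0 = 1 := by simp [qPoch, eval_prod]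
  exact fun h0 => by simp [h0] at h

theorem qPoch_eq_qPoch_sub_mul_prod {N k : ℕ} (hk : k ≤ N) :
    qPoch N = qPoch (N - k) * ∏ i ∈ Finset.range k, (1 - X ^ (N - i)) := by
  induction k with
  | zero => simp
  | succ k ih =>
    have hsucc : N - k = N - (k + 1) + 1 := by omega
    rw [ih (by omega), hsucc, qPoch_succ, Finset.prod_range_succ, ← hsucc]
    ring

theorem qPoch_mul_eq_prod_of_mul_eq_qPoch {b : ℤ[X]} {N k : ℕ} (hk : k ≤ N)
    (hb : b * (qPoch k * qPoch (N - k)) = qPoch N) :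
    qPoch k * b = ∏ i ∈ Finset.range k, (1 - X ^ (N - i)) := by
  refine mul_right_cancel₀ (qPoch_ne_zero (N - k)) ?_
  rw [qPoch_eq_qPoch_sub_mul_prod hk] at hb
  linear_combination hb

theorem prod_X_pow_sub_one (m : ℕ) :
    ∏ i ∈ Finset.range m, ((X : ℤ[X]) ^ (i + 1) - 1) = (-1) ^ m * qPoch m := by
  calc ∏ i ∈ Finset.range m, ((X : ℤ[X]) ^ (i + 1) - 1)
      = ∏ i ∈ Finset.range m, -(1 - X ^ (i + 1)) := by simp only [neg_sub]
    _ = (-1) ^ m * qPoch m := by rw [Finset.prod_neg, Finset.card_range, qPoch]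

theorem prod_X_pow_succ (m : ℕ) :
    ∏ i ∈ Finset.range m, (X : ℤ[X]) ^ (i + 1) = X ^ ((m + 1) * m / 2) := by
  have hsum := Finset.sum_range_id (m + 1)
  rw [Finset.sum_range_succ', Nat.add_sub_cancel, add_zero] at hsum
  rw [Finset.prod_pow_eq_pow_sum, hsum]

theorem dvd_X_pow_mul_prod_sub_qPoch {d : ℤ[X]} {N m : ℕ} (hd : d ∣ X ^ N - 1) (hm : m ≤ N) :
    d ∣ X ^ ((m + 1) * m / 2) * ∏ i ∈ Finset.range m, (1 - X ^ (N - (i + 1))) -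
      (-1) ^ m * qPoch m := by
  rw [← prod_X_pow_succ, ← Finset.prod_mul_distrib, ← prod_X_pow_sub_one]
  refine Finset.dvd_prod_sub_prod fun i hi => ?_
  have hpow : (X : ℤ[X]) ^ (i + 1) * X ^ (N - (i + 1)) = X ^ N := by
    rw [← pow_add, Nat.add_sub_cancel' (by simp at hi; omega)]
  rw [show (X : ℤ[X]) ^ (i + 1) * (1 - X ^ (N - (i + 1))) - (X ^ (i + 1) - 1) = -(X ^ N - 1) by
    linear_combination -hpow]
  exact hd.neg_right

theorem dvd_of_cyclotomic_dvd_X_pow_sub_one {n m : ℕ} (hn : 0 < n)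
    (h : cyclotomic n ℤ ∣ X ^ m - 1) : n ∣ m := by
  have hζ := Complex.isPrimitiveRoot_exp n hn.ne'
  have hroot : aeval (Complex.exp (2 * Real.pi * Complex.I / n)) (cyclotomic n ℤ) = 0 := by
    rw [aeval_def, eval₂_eq_eval_map, map_cyclotomic]
    exact hζ.isRoot_cyclotomic hn
  have hdvd := map_dvd (aeval (Complex.exp (2 * Real.pi * Complex.I / n))) h
  rw [hroot, zero_dvd_iff, map_sub, map_pow, aeval_X, map_one, sub_eq_zero] at hdvd
  exact (hζ.pow_eq_one_iff_dvd m).1 hdvd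

theorem cyclotomic_not_dvd_qPoch {n j : ℕ} (hn : 0 < n) (hj : j < n) :
    ¬ cyclotomic n ℤ ∣ qPoch j := by
  intro h
  have hprime : Prime (cyclotomic n ℤ) :=
    UniqueFactorizationMonoid.irreducible_iff_prime.mp (cyclotomic.irreducible hn)
  obtain ⟨i, hi, hdvd⟩ := hprime.exists_mem_finset_dvd h
  rw [← dvd_neg, neg_sub] at hdvd
  have := Nat.le_of_dvd i.succ_pos (dvd_of_cyclotomic_dvd_X_pow_sub_one hn hdvd)
  simp at hi
  omega

theorem stmt_8_general (n k : ℕ) (hn : 0 < n) (hk : 1 ≤ k) (hk' : k ≤ n - 1)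
    (B : ℕ → ℕ → Polynomial ℤ)
    (hB : ∀ m j : ℕ, j ≤ m → B m j * (qPoch j * qPoch (m - j)) = qPoch m) :
    (Polynomial.cyclotomic n ℤ) ^ 2 ∣
      X ^ (k * (k - 1) / 2) * (1 - X ^ k) * B (2 * n) k -
        2 * (X ^ n - 1) * (-1 : Polynomial ℤ) ^ k := by
  obtain ⟨m, rfl⟩ : ∃ m, k = m + 1 := ⟨k - 1, by omega⟩
  rw [Nat.add_sub_cancel]
  have hΦ : Prime (cyclotomic n ℤ) :=
    UniqueFactorizationMonoid.irreducible_iff_prime.mp (cyclotomic.irreducible hn)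
  have hΦn : cyclotomic n ℤ ∣ X ^ n - 1 := cyclotomic.dvd_X_pow_sub_one n ℤ
  have hΦ2n : cyclotomic n ℤ ∣ X ^ (2 * n) - 1 := mul_comm n 2 ▸
    hΦn.trans (pow_one_sub_dvd_pow_mul_sub_one X n 2)
  set P := ∏ i ∈ Finset.range m, (1 - (X : ℤ[X]) ^ (2 * n - (i + 1)))
  have hQB : qPoch (m + 1) * B (2 * n) (m + 1) = (1 - X ^ (2 * n)) * P := by
    rw [qPoch_mul_eq_prod_of_mul_eq_qPoch (by omega) (hB _ _ (by omega)),
      Finset.prod_range_succ', Nat.sub_zero, mul_comm]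
  set A := X ^ ((m + 1) * m / 2) * P
  set C := (-1 : ℤ[X]) ^ m * qPoch m
  have hAC : cyclotomic n ℤ ∣ A - C := dvd_X_pow_mul_prod_sub_qPoch hΦ2n (by omega)
  refine hΦ.pow_dvd_of_dvd_mul_left 2 (cyclotomic_not_dvd_qPoch (j := m + 1) hn (by omega)) ?_
  have hfactor : qPoch (m + 1) * (X ^ ((m + 1) * m / 2) * (1 - X ^ (m + 1)) * B (2 * n) (m + 1) -
      2 * (X ^ n - 1) * (-1) ^ (m + 1)) =
      -(1 - X ^ (m + 1)) * (X ^ n - 1) * ((X ^ n - 1) * A + 2 * (A - C)) := by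
    linear_combination X ^ ((m + 1) * m / 2) * (1 - X ^ (m + 1)) * hQB -
      2 * (X ^ n - 1) * (-1 : ℤ[X]) ^ (m + 1) * qPoch_succ m
  rw [hfactor, sq]
  exact mul_dvd_mul (hΦn.mul_left _) (dvd_add (hΦn.mul_right _) (hAC.mul_left _))

theorem stmt_8 (n k : ℕ) (hn : 0 < n) (hk : 1 ≤ k) (hk' : k ≤ n - 1)
    (B : ℕ → ℕ → Polynomial ℤ)
    (hB : ∀ m j : ℕ, j ≤ m → B m j * (qPoch j * qPoch (m - j)) = qPoch m)
    (hB' : ∀ m j : ℕ, m < j → B m j = 0) :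
    (Polynomial.cyclotomic n ℤ) ^ 2 ∣
      X ^ (k * (k - 1) / 2) * (1 - X ^ k) * B (2 * n) k -
        2 * (X ^ n - 1) * (-1 : Polynomial ℤ) ^ k :=
  stmt_8_general n k hn hk hk' B hB
end

section
/- Let p ≥ 5 be a prime. Then Σ_{i=0}^{p-1} Σ_{j=0}^{p-1} (binomial(i+j, i))² ≡ χ(p) (mod p²), where the congruence is between integers. -/
/-!
Modulo `p²` the terms with `i + j ≥ p` vanish, since then `p ∣ (i + j).choose i`; summing the
rest along the antidiagonals `i + j = m` leaves `∑_{m<p} C(2m, m)`. Over `ℤ`,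
`∑_{k<n} C(2k, k) = ∑_d χ(d) C(2n, n + d)`: Pascal's rule turns the increment in `n` into a
telescoping sum because `χ(d) + χ(d+1) + χ(d+2) = 0`. For `0 < d < p` Vandermonde gives
`C(2p, p + d) ≡ 2 C(p, d) (mod p²)`, and `s(n) = ∑_k χ(k) C(n, k)` obeys
`s(n+2) = s(n+1) - s(n)`, so `s(p) = χ(p)` for odd `p`. Hence the sum is
`≡ χ(p) + 2 (s(p) - χ(p)) = χ(p)`.
-/

/-- The Legendre symbol `(p/3)`. -/
def chi (n : ℕ) : ℤ := if n % 3 = 1 then 1 else if n % 3 = 2 then -1 else 0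

open Finset

theorem chi_add_chi_succ_add_chi_add_two (n : ℕ) : chi n + chi (n + 1) + chi (n + 2) = 0 := by
  simp only [chi]
  split_ifs <;> omega

def chiBinomialSum (r n : ℕ) : ℤ := ∑ k ∈ range (n + 1), (n.choose k : ℤ) * chi (k + r)

theorem chiBinomialSum_succ (r n : ℕ) :
    chiBinomialSum r (n + 1) = chiBinomialSum r n + chiBinomialSum (r + 1) n := by
  simpa only [chiBinomialSum, add_right_comm _ 1 r, add_assoc] using
    sum_choose_succ_mul (R := ℤ) (fun k _ ↦ chi (k + r)) n

theorem chiBinomialSum_add_two (n : ℕ) :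
    chiBinomialSum 0 (n + 2) = chiBinomialSum 0 (n + 1) - chiBinomialSum 0 n := by
  have hzero : chiBinomialSum 0 n + chiBinomialSum 1 n + chiBinomialSum 2 n = 0 := by
    simp only [chiBinomialSum, ← sum_add_distrib, ← mul_add]
    exact sum_eq_zero fun k _ ↦ by rw [chi_add_chi_succ_add_chi_add_two, mul_zero]
  rw [chiBinomialSum_succ, chiBinomialSum_succ 1]
  linear_combination hzero

theorem chiBinomialSum_zero (n : ℕ) : chiBinomialSum 0 n = -(-1) ^ n * chi n := by
  induction n using Nat.twoStepInduction with
  | zero => rfl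
  | one => rfl
  | more n ih₀ ih₁ =>
    rw [chiBinomialSum_add_two, ih₀, ih₁]
    linear_combination (-1) ^ n * chi_add_chi_succ_add_chi_add_two n

theorem sum_range_choose_mul_chi_of_odd {n : ℕ} (hn : Odd n) :
    ∑ k ∈ range n, (n.choose k : ℤ) * chi k = 0 := by
  have h := chiBinomialSum_zero n
  rw [chiBinomialSum, sum_range_succ, hn.neg_one_pow, Nat.choose_self] at h
  simpa using h

theorem Nat.choose_add_two_add_two (m j : ℕ) :
    (m + 2).choose (j + 2) = m.choose j + 2 * m.choose (j + 1) + m.choose (j + 2) := by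
  simp only [Nat.choose_succ_succ']
  ring

theorem sum_range_chi_succ_mul_add_add (c : ℕ → ℤ) (n : ℕ) (hc₁ : c (n + 1) = 0)
    (hc₂ : c (n + 2) = 0) :
    ∑ d ∈ range (n + 1), chi (d + 1) * (c d + c (d + 1) + c (d + 2)) = c 0 := by
  have hG : ∀ d, chi (d + 1) * (c d + c (d + 1) + c (d + 2))
      = (chi (d + 1) * c d - chi d * c (d + 1))
        - (chi (d + 2) * c (d + 1) - chi (d + 1) * c (d + 2)) := fun d ↦ by
    linear_combination c (d + 1) * chi_add_chi_succ_add_chi_add_two d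
  rw [sum_congr rfl fun d _ ↦ hG d,
    sum_range_sub' (fun d ↦ chi (d + 1) * c d - chi d * c (d + 1)), hc₁, hc₂,
    show chi 1 = 1 from rfl, show chi 0 = 0 from rfl]
  ring

theorem sum_centralBinom_eq_sum_chi_mul_choose (n : ℕ) :
    ∑ k ∈ range n, (k.centralBinom : ℤ)
      = ∑ d ∈ range (n + 1), chi d * (2 * n).choose (n + d) := by
  induction n with
  | zero => rfl
  | succ n ih =>
    set c : ℕ → ℤ := fun d ↦ (2 * n).choose (n + d) with hc
    have hc_succ : c (n + 1) = 0 := by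
      simp [hc, Nat.choose_eq_zero_of_lt (by omega : 2 * n < n + (n + 1))]
    have hc_add_two : c (n + 2) = 0 := by
      simp [hc, Nat.choose_eq_zero_of_lt (by omega : 2 * n < n + (n + 2))]
    have hnext : ∑ d ∈ range (n + 2), chi d * (2 * (n + 1)).choose (n + 1 + d)
        = ∑ d ∈ range (n + 1), chi (d + 1) * (c d + 2 * c (d + 1) + c (d + 2)) := by
      rw [sum_range_succ', show chi 0 = 0 from rfl, zero_mul, add_zero]
      refine sum_congr rfl fun d _ ↦ ?_
      rw [show 2 * (n + 1) = 2 * n + 2 by ring, show n + 1 + (d + 1) = n + d + 2 by ring,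
        Nat.choose_add_two_add_two]
      simp only [hc, Nat.cast_add, Nat.cast_mul, Nat.cast_ofNat, add_assoc]
    have hprev : ∑ d ∈ range (n + 1), chi d * c d
        = ∑ d ∈ range (n + 1), chi (d + 1) * c (d + 1) := by
      rw [sum_range_succ', sum_range_succ, hc_succ, show chi 0 = 0 from rfl]
      ring
    calc ∑ k ∈ range (n + 1), (k.centralBinom : ℤ)
          = ∑ d ∈ range (n + 1), chi d * c d + c 0 := by
          rw [sum_range_succ, ih, Nat.centralBinom_eq_two_mul_choose]; rfl
      _ = ∑ d ∈ range (n + 1), chi (d + 1) * c (d + 1)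
            + ∑ d ∈ range (n + 1), chi (d + 1) * (c d + c (d + 1) + c (d + 2)) := by
          rw [hprev, sum_range_chi_succ_mul_add_add c n hc_succ hc_add_two]
      _ = ∑ d ∈ range (n + 1), chi (d + 1) * (c d + 2 * c (d + 1) + c (d + 2)) := by
          rw [← sum_add_distrib]; exact sum_congr rfl fun d _ ↦ by ring
      _ = _ := hnext.symm

theorem Nat.Prime.sq_dvd_choose_mul_choose {p a b : ℕ} (hp : p.Prime) (ha : a ≠ p)
    (hb : b ≠ p) (hab : p < a + b) : p ^ 2 ∣ p.choose a * p.choose b := by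
  rcases ha.lt_or_gt with ha | ha
  · rcases hb.lt_or_gt with hb | hb
    · exact sq p ▸
        mul_dvd_mul (hp.dvd_choose_self (by omega) ha) (hp.dvd_choose_self (by omega) hb)
    · simp [Nat.choose_eq_zero_of_lt hb]
  · simp [Nat.choose_eq_zero_of_lt ha]

theorem Nat.Prime.choose_two_mul_add_eq {p d : ℕ} (hp : p.Prime) (hd : 0 < d) (hdp : d < p) :
    ((2 * p).choose (p + d) : ZMod (p ^ 2)) = 2 * p.choose d := by
  rw [two_mul, Nat.add_choose_eq, Nat.cast_sum,
    sum_eq_add_of_mem (d, p) (p, d) (by simp [add_comm]) (by simp) (by simp; omega)]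
  · simp [two_mul]
  · rintro ⟨a, b⟩ hab hne
    rw [Finset.HasAntidiagonal.mem_antidiagonal] at hab
    rw [ZMod.natCast_eq_zero_iff]
    exact hp.sq_dvd_choose_mul_choose (by grind) (by grind) (by omega)

theorem Nat.Prime.sum_chi_mul_choose_two_mul_add {p : ℕ} (hp : p.Prime) (hodd : Odd p) :
    ((∑ d ∈ range (p + 1), chi d * (2 * p).choose (p + d) : ℤ) : ZMod (p ^ 2)) = chi p := by
  have hterm : ∀ d ∈ range p,
      ((chi d * (2 * p).choose (p + d) : ℤ) : ZMod (p ^ 2))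
        = 2 * ((chi d * p.choose d : ℤ) : ZMod (p ^ 2)) := by
    intro d hd
    rcases d.eq_zero_or_pos with rfl | hd0
    · simp [chi]
    · push_cast
      rw [hp.choose_two_mul_add_eq hd0 (mem_range.1 hd)]
      ring
  rw [Int.cast_sum, sum_range_succ, sum_congr rfl hterm, ← mul_sum, ← Int.cast_sum]
  simp_rw [mul_comm (chi _)]
  rw [sum_range_choose_mul_chi_of_odd hodd]
  simp [← two_mul]

theorem Nat.Prime.sum_sq_choose_add_eq_sum_centralBinom {p : ℕ} (hp : p.Prime) :
    ∑ i ∈ range p, ∑ j ∈ range p, (((i + j).choose i ^ 2 : ℕ) : ZMod (p ^ 2))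
      = ∑ m ∈ range p, (m.centralBinom : ZMod (p ^ 2)) := by
  have htrunc : ∀ i ∈ range p, ∑ j ∈ range p, (((i + j).choose i ^ 2 : ℕ) : ZMod (p ^ 2))
      = ∑ j ∈ range (p - i), (((i + j).choose i ^ 2 : ℕ) : ZMod (p ^ 2)) := by
    intro i hi
    refine (sum_subset (range_subset_range.2 (Nat.sub_le p i)) fun j hj hji ↦ ?_).symm
    simp only [mem_range] at hi hj hji
    rw [ZMod.natCast_eq_zero_iff]
    exact pow_dvd_pow_of_dvd (hp.dvd_choose_add hi hj (by omega)) 2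
  rw [sum_congr rfl htrunc, ← sum_range_diag_flip]
  refine sum_congr rfl fun m _ ↦ ?_
  rw [Nat.centralBinom_eq_two_mul_choose, ← Nat.sum_range_choose_sq, Nat.cast_sum]
  refine sum_congr rfl fun k hk ↦ ?_
  rw [Nat.add_sub_cancel' (mem_range_succ_iff.1 hk)]

theorem stmt_15 (p : ℕ) (hp : p.Prime) (hp5 : 5 ≤ p) :
    (∑ i ∈ Finset.range p, ∑ j ∈ Finset.range p, ((i + j).choose i : ℤ) ^ 2)
      ≡ chi p [ZMOD ((p : ℤ) ^ 2)] := by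
  have hodd : Odd p := hp.odd_of_ne_two (by omega)
  rw [← Nat.cast_pow, ← ZMod.intCast_eq_intCast_iff, ← hp.sum_chi_mul_choose_two_mul_add hodd,
    ← sum_centralBinom_eq_sum_chi_mul_choose]
  push_cast
  exact_mod_cast hp.sum_sq_choose_add_eq_sum_centralBinom
end
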